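/- Let (V₁, V₂, β) be a step-two datum with dim V₁ = m, let δ₀ > 0, and let g_v be a vertical metric on V₂ with δ(g_v) < δ₀. Then for all X, Y ∈ V₁ and all T ∈ V₂, | g_v(T,T)·⟨X,Y⟩ − ⟨J_T X, J_T Y⟩ | ≤ √m·δ₀·g_v(T,T)·‖X‖·‖Y‖; in particular, | g_v(T,T)·‖X‖² − ‖J_T X‖² | ≤ √m·δ₀·g_v(T,T)·‖X‖². -/

import Mathlib

open scoped RealInnerProductSpace

/-- Hilbert–Schmidt norm of an endomorphism of a finite-dimensional real
inner product space: `‖A‖_HS = (trace (A* ∘ A))^{1/2}`. -/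
noncomputable def hsNorm {V : Type*} [NormedAddCommGroup V] [InnerProductSpace ℝ V]
    [FiniteDimensional ℝ V] (A : V →ₗ[ℝ] V) : ℝ :=
  Real.sqrt (LinearMap.trace ℝ V (LinearMap.adjoint A ∘ₗ A))

section

variable {V₁ V₂ : Type*} [NormedAddCommGroup V₁] [InnerProductSpace ℝ V₁]
  [FiniteDimensional ℝ V₁] [AddCommGroup V₂] [Module ℝ V₂] [FiniteDimensional ℝ V₂]

/-- A step-two datum: nontrivial layers, alternating bracket whose image spans `V₂`. -/
def IsStepTwoDatum (β : V₁ →ₗ[ℝ] V₁ →ₗ[ℝ] V₂) : Prop :=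
  0 < Module.finrank ℝ V₁ ∧ 0 < Module.finrank ℝ V₂ ∧ (∀ X : V₁, β X X = 0) ∧
    Submodule.span ℝ {T : V₂ | ∃ X Y : V₁, β X Y = T} = ⊤

/-- A vertical metric: positive-definite symmetric bilinear form on `V₂`. -/
def IsVerticalMetric (gv : V₂ →ₗ[ℝ] V₂ →ₗ[ℝ] ℝ) : Prop :=
  (∀ S T : V₂, gv S T = gv T S) ∧ ∀ T : V₂, T ≠ 0 → 0 < gv T T

/-- `J` is Kaplan's operator `J_T` for the bracket `β` and vertical metric `gv`. -/
def IsKaplan (β : V₁ →ₗ[ℝ] V₁ →ₗ[ℝ] V₂) (gv : V₂ →ₗ[ℝ] V₂ →ₗ[ℝ] ℝ) (T : V₂)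
    (J : V₁ →ₗ[ℝ] V₁) : Prop :=
  ∀ U W : V₁, ⟪J U, W⟫ = gv (β U W) T

/-- H-type deviation relative to the vertical metric `gv`. -/
noncomputable def deviationOf (β : V₁ →ₗ[ℝ] V₁ →ₗ[ℝ] V₂) (gv : V₂ →ₗ[ℝ] V₂ →ₗ[ℝ] ℝ) : ℝ :=
  (Real.sqrt (Module.finrank ℝ V₁))⁻¹ *
    sSup {x : ℝ | ∃ T : V₂, ∃ J : V₁ →ₗ[ℝ] V₁,
      gv T T = 1 ∧ IsKaplan β gv T J ∧ x = hsNorm (J ∘ₗ J + LinearMap.id)}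

/-- H-type deviation of the step-two datum. -/
noncomputable def deviation (β : V₁ →ₗ[ℝ] V₁ →ₗ[ℝ] V₂) : ℝ :=
  sInf {d : ℝ | ∃ gv : V₂ →ₗ[ℝ] V₂ →ₗ[ℝ] ℝ, IsVerticalMetric gv ∧ d = deviationOf β gv}

end

/-! ### Auxiliary lemmas -/

section HSAux
variable {V : Type*} [NormedAddCommGroup V] [InnerProductSpace ℝ V] [FiniteDimensional ℝ V]

lemma hsNorm_eq (A : V →ₗ[ℝ] V)
    (e : OrthonormalBasis (Fin (Module.finrank ℝ V)) ℝ V) :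
    hsNorm A = Real.sqrt (∑ i, ‖A (e i)‖ ^ 2) := by
  rw [hsNorm]; congr 1
  rw [LinearMap.trace_eq_matrix_trace ℝ e.toBasis, Matrix.trace]
  refine Finset.sum_congr rfl fun i _ => ?_
  rw [Matrix.diag_apply, LinearMap.toMatrix_apply, e.coe_toBasis,
    e.coe_toBasis_repr_apply, e.repr_apply_apply, LinearMap.comp_apply,
    LinearMap.adjoint_inner_right, real_inner_self_eq_norm_sq]

lemma norm_apply_le_hsNorm (A : V →ₗ[ℝ] V) (x : V) : ‖A x‖ ≤ hsNorm A * ‖x‖ := by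
  set e := stdOrthonormalBasis ℝ V
  have hsum : A x = ∑ i, e.repr x i • A (e i) := by
    conv_lhs => rw [← e.sum_repr x]
    rw [map_sum]; simp
  have h1 : ‖A x‖ ≤ ∑ i, |e.repr x i| * ‖A (e i)‖ := by
    rw [hsum]
    refine (norm_sum_le _ _).trans_eq ?_
    refine Finset.sum_congr rfl fun i _ => ?_
    rw [norm_smul, Real.norm_eq_abs]
  have h2 : (∑ i, |e.repr x i| * ‖A (e i)‖) ^ 2
      ≤ (∑ i, |e.repr x i| ^ 2) * ∑ i, ‖A (e i)‖ ^ 2 :=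
    Finset.sum_mul_sq_le_sq_mul_sq _ _ _
  have hx : ∑ i, |e.repr x i| ^ 2 = ‖x‖ ^ 2 := by
    have := e.repr.norm_map x
    rw [EuclideanSpace.norm_eq] at this
    rw [← this, Real.sq_sqrt (by positivity)]
    refine Finset.sum_congr rfl fun i _ => ?_
    rw [Real.norm_eq_abs]
  have hnn : (0:ℝ) ≤ ∑ i, ‖A (e i)‖ ^ 2 := by positivity
  have key : ‖A x‖ ^ 2 ≤ (hsNorm A * ‖x‖) ^ 2 := by
    calc ‖A x‖ ^ 2 ≤ (∑ i, |e.repr x i| * ‖A (e i)‖) ^ 2 := by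
          apply pow_le_pow_left₀ (norm_nonneg _) h1 2
      _ ≤ (∑ i, |e.repr x i| ^ 2) * ∑ i, ‖A (e i)‖ ^ 2 := h2
      _ = (hsNorm A * ‖x‖) ^ 2 := by
          rw [hx, hsNorm_eq A e, mul_pow, Real.sq_sqrt hnn, mul_comm]
  have h0 : 0 ≤ hsNorm A * ‖x‖ := mul_nonneg (Real.sqrt_nonneg _) (norm_nonneg _)
  nlinarith [norm_nonneg (A x), key, h0]

end HSAux

section ContAux
variable {V₁ W : Type*} [NormedAddCommGroup V₁] [InnerProductSpace ℝ V₁]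
  [FiniteDimensional ℝ V₁] [NormedAddCommGroup W] [NormedSpace ℝ W] [FiniteDimensional ℝ W]

lemma continuous_bilin_apply (k : W →ₗ[ℝ] V₁ →ₗ[ℝ] V₁) {h : W → V₁} (hh : Continuous h) :
    Continuous fun T => k T (h T) := by
  classical
  let b := Module.finBasis ℝ W
  have heq : ∀ T, k T (h T) = ∑ j, b.repr T j • (k (b j)) (h T) := by
    intro T
    have hk : k T = ∑ j, b.repr T j • k (b j) := by
      conv_lhs => rw [← b.sum_repr T]
      rw [map_sum]
      simp
    rw [hk, LinearMap.sum_apply]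
    simp
  simp_rw [heq]
  refine continuous_finset_sum _ fun j _ => Continuous.smul ?_ ?_
  · exact (b.coord j).continuous_of_finiteDimensional
  · exact (k (b j)).continuous_of_finiteDimensional.comp hh

lemma continuous_hsNorm_quad (k : W →ₗ[ℝ] V₁ →ₗ[ℝ] V₁) :
    Continuous fun T => hsNorm (k T ∘ₗ k T + LinearMap.id) := by
  set e := stdOrthonormalBasis ℝ V₁ with he
  have heq : ∀ T : W, hsNorm (k T ∘ₗ k T + LinearMap.id)
      = Real.sqrt (∑ i, ‖k T (k T (e i)) + e i‖ ^ 2) := by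
    intro T
    rw [hsNorm_eq _ e]
    simp [LinearMap.add_apply, LinearMap.comp_apply]
  simp_rw [heq]
  refine Real.continuous_sqrt.comp (continuous_finset_sum _ fun i _ => ?_)
  have h1 : Continuous fun T : W => k T (e i) := continuous_bilin_apply k continuous_const
  have h2 : Continuous fun T : W => k T (k T (e i)) + e i :=
    (continuous_bilin_apply k h1).add continuous_const
  exact (h2.norm).pow 2

end ContAux

section KapAux
variable {V₁ V₂ : Type*} [NormedAddCommGroup V₁] [InnerProductSpace ℝ V₁]
  [FiniteDimensional ℝ V₁] [AddCommGroup V₂] [Module ℝ V₂] [FiniteDimensional ℝ V₂]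
  (β : V₁ →ₗ[ℝ] V₁ →ₗ[ℝ] V₂) (gv : V₂ →ₗ[ℝ] V₂ →ₗ[ℝ] ℝ)

/-- The Kaplan operator as a linear map in `T`. -/
noncomputable def kap : V₂ →ₗ[ℝ] V₁ →ₗ[ℝ] V₁ :=
  LinearMap.mk₂ ℝ (fun T U => (InnerProductSpace.toDual ℝ V₁).symm
      (LinearMap.toContinuousLinearMap ((gv.flip T) ∘ₗ (β U))))
    (fun T T' U => by simp [map_add, LinearMap.add_comp])
    (fun c T U => by simp [map_smul, LinearMap.smul_comp])
    (fun T U U' => by simp [map_add, LinearMap.comp_add])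
    (fun c T U => by simp [map_smul, LinearMap.comp_smul])

lemma kap_isKaplan (T : V₂) : IsKaplan β gv T (kap β gv T) := by
  intro U W
  simp [kap, InnerProductSpace.toDual_symm_apply]

lemma IsKaplan.eq_kap {T : V₂} {J : V₁ →ₗ[ℝ] V₁} (h : IsKaplan β gv T J) :
    J = kap β gv T := by
  ext U
  refine ext_inner_right ℝ fun W => ?_
  rw [h U W, kap_isKaplan β gv T U W]

lemma bddAbove_kaplanSet (hgv : IsVerticalMetric gv) :
    BddAbove {x : ℝ | ∃ T : V₂, ∃ J : V₁ →ₗ[ℝ] V₁,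
      gv T T = 1 ∧ IsKaplan β gv T J ∧ x = hsNorm (J ∘ₗ J + LinearMap.id)} := by
  letI core : InnerProductSpace.Core ℝ V₂ :=
  { inner := fun S T => gv S T
    conj_inner_symm := fun x y => by simpa using hgv.1 y x
    re_inner_nonneg := fun x => by
      rcases eq_or_ne x 0 with h | h
      · simp [h]
      · simpa using (hgv.2 x h).le
    definite := fun x hx => by
      by_contra h
      exact (hgv.2 x h).ne' (by simpa using hx)
    add_left := fun x y z => by simp
    smul_left := fun x y r => by simp }
  letI : NormedAddCommGroup V₂ := core.toNormedAddCommGroup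
  letI : InnerProductSpace ℝ V₂ := InnerProductSpace.ofCore core.toCore
  have hcomp : IsCompact ((fun T : V₂ =>
      hsNorm (kap β gv T ∘ₗ kap β gv T + LinearMap.id)) '' Metric.sphere (0 : V₂) 1) :=
    (isCompact_sphere (0 : V₂) 1).image (continuous_hsNorm_quad (kap β gv))
  refine BddAbove.mono ?_ hcomp.bddAbove
  rintro x ⟨T, J, hT1, hJ, rfl⟩
  refine ⟨T, ?_, ?_⟩
  · rw [mem_sphere_zero_iff_norm]
    have hnorm : ‖T‖ = Real.sqrt (gv T T) := by
      rw [@norm_eq_sqrt_real_inner V₂]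
      rfl
    rw [hnorm, hT1, Real.sqrt_one]
  · rw [hJ.eq_kap β gv]

end KapAux


open scoped RealInnerProductSpace in
/-- If `δ(g_v) < δ₀` then for all horizontal `X, Y` and vertical `T`,
`|g_v(T,T)⟨X,Y⟩ - ⟨J_T X, J_T Y⟩| ≤ √m·δ₀·g_v(T,T)·‖X‖·‖Y‖`, and in particular
`|g_v(T,T)‖X‖² - ‖J_T X‖²| ≤ √m·δ₀·g_v(T,T)·‖X‖²`. -/
theorem deviation_controls_J_inner_products {V₁ V₂ : Type*}
    [NormedAddCommGroup V₁] [InnerProductSpace ℝ V₁] [FiniteDimensional ℝ V₁]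
    [AddCommGroup V₂] [Module ℝ V₂] [FiniteDimensional ℝ V₂]
    (β : V₁ →ₗ[ℝ] V₁ →ₗ[ℝ] V₂) (hβ : IsStepTwoDatum β)
    (m : ℕ) (hm : m = Module.finrank ℝ V₁)
    (δ₀ : ℝ) (hδ₀ : 0 < δ₀)
    (gv : V₂ →ₗ[ℝ] V₂ →ₗ[ℝ] ℝ) (hgv : IsVerticalMetric gv)
    (hdev : deviationOf β gv < δ₀) :
    ∀ T : V₂, ∀ J : V₁ →ₗ[ℝ] V₁, IsKaplan β gv T J →
      (∀ X Y : V₁,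
        |gv T T * ⟪X, Y⟫ - ⟪J X, J Y⟫| ≤ Real.sqrt m * δ₀ * gv T T * ‖X‖ * ‖Y‖) ∧
      (∀ X : V₁,
        |gv T T * ‖X‖ ^ 2 - ‖J X‖ ^ 2| ≤ Real.sqrt m * δ₀ * gv T T * ‖X‖ ^ 2) := by
  intro T J hJ
  have key : ∀ X Y : V₁,
      |gv T T * ⟪X, Y⟫ - ⟪J X, J Y⟫| ≤ Real.sqrt m * δ₀ * gv T T * ‖X‖ * ‖Y‖ := by
    rcases eq_or_ne T 0 with rfl | hT0
    · have hJ0 : ∀ U : V₁, J U = 0 := by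
        intro U
        have h0 : ∀ W : V₁, ⟪J U, W⟫ = 0 := fun W => by simpa using hJ U W
        have := h0 (J U)
        exact inner_self_eq_zero.mp this
      intro X Y
      simp [hJ0]
    · have hTT : 0 < gv T T := hgv.2 T hT0
      set c := Real.sqrt (gv T T) with hc
      have hc0 : 0 < c := Real.sqrt_pos.mpr hTT
      have hc2 : c ^ 2 = gv T T := Real.sq_sqrt hTT.le
      set J' : V₁ →ₗ[ℝ] V₁ := c⁻¹ • J with hJ'def
      set T' : V₂ := c⁻¹ • T with hT'def
      have hT'1 : gv T' T' = 1 := by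
        have h : gv T' T' = c⁻¹ * (c⁻¹ * gv T T) := by
          rw [hT'def]
          simp [map_smul, smul_eq_mul]
        rw [h, ← hc2]
        field_simp
      have hK' : IsKaplan β gv T' J' := by
        intro U W
        rw [hJ'def, hT'def, LinearMap.smul_apply, real_inner_smul_left, hJ U W, map_smul,
          smul_eq_mul]
      set A : V₁ →ₗ[ℝ] V₁ := J' ∘ₗ J' + LinearMap.id with hA
      -- the sup bound
      have hb := bddAbove_kaplanSet β gv hgv
      have hmem : hsNorm A ∈ {x : ℝ | ∃ T : V₂, ∃ J : V₁ →ₗ[ℝ] V₁,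
          gv T T = 1 ∧ IsKaplan β gv T J ∧ x = hsNorm (J ∘ₗ J + LinearMap.id)} :=
        ⟨T', J', hT'1, hK', rfl⟩
      have hle := le_csSup hb hmem
      have hm0 : (0:ℝ) < Real.sqrt (Module.finrank ℝ V₁) :=
        Real.sqrt_pos.mpr (by exact_mod_cast hβ.1)
      rw [deviationOf] at hdev
      have hhs : hsNorm A ≤ Real.sqrt m * δ₀ := by
        rw [hm]
        refine hle.trans ?_
        have h := (inv_mul_le_iff₀ hm0).mp hdev.le
        linarith [h]
      -- skew-symmetry
      have halt : ∀ X Y : V₁, β X Y = - β Y X := by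
        intro X Y
        have h := hβ.2.2.1
        have h2 := h (X + Y)
        simp only [map_add, LinearMap.add_apply, h X, h Y, add_zero, zero_add] at h2
        exact eq_neg_of_add_eq_zero_right h2
      have hskew : ∀ X Y : V₁, ⟪J X, J Y⟫ = - ⟪X, J (J Y)⟫ := by
        intro X Y
        rw [hJ X (J Y), halt X (J Y), map_neg, LinearMap.neg_apply, ← hJ (J Y) X,
          real_inner_comm]
      intro X Y
      have hJJ : J (J Y) = (c ^ 2) • (J' (J' Y)) := by
        rw [hJ'def]
        simp only [LinearMap.smul_apply, map_smul, smul_smul]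
        rw [show c ^ 2 * (c⁻¹ * c⁻¹) = 1 by field_simp, one_smul]
      have hid : gv T T * ⟪X, Y⟫ - ⟪J X, J Y⟫ = (c ^ 2) * ⟪X, A Y⟫ := by
        rw [hskew X Y, hJJ, hA]
        simp only [LinearMap.add_apply, LinearMap.comp_apply, LinearMap.id_apply,
          inner_add_right, real_inner_smul_right]
        rw [← hc2]
        ring
      have h5 : |⟪X, A Y⟫| ≤ (Real.sqrt m * δ₀) * (‖X‖ * ‖Y‖) := by
        calc |⟪X, A Y⟫| ≤ ‖X‖ * ‖A Y‖ := abs_real_inner_le_norm _ _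
          _ ≤ ‖X‖ * (hsNorm A * ‖Y‖) :=
            mul_le_mul_of_nonneg_left (norm_apply_le_hsNorm A Y) (norm_nonneg X)
          _ ≤ ‖X‖ * ((Real.sqrt m * δ₀) * ‖Y‖) :=
            mul_le_mul_of_nonneg_left
              (mul_le_mul_of_nonneg_right hhs (norm_nonneg Y)) (norm_nonneg X)
          _ = (Real.sqrt m * δ₀) * (‖X‖ * ‖Y‖) := by ring
      calc |gv T T * ⟪X, Y⟫ - ⟪J X, J Y⟫| = c ^ 2 * |⟪X, A Y⟫| := by
            rw [hid, abs_mul, abs_of_nonneg (sq_nonneg c)]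
        _ ≤ c ^ 2 * ((Real.sqrt m * δ₀) * (‖X‖ * ‖Y‖)) :=
            mul_le_mul_of_nonneg_left h5 (sq_nonneg c)
        _ = Real.sqrt m * δ₀ * gv T T * ‖X‖ * ‖Y‖ := by rw [← hc2]; ring
  refine ⟨key, fun X => ?_⟩
  have h2 := key X X
  rw [real_inner_self_eq_norm_sq, real_inner_self_eq_norm_sq] at h2
  have h3 : Real.sqrt m * δ₀ * gv T T * ‖X‖ * ‖X‖
      = Real.sqrt m * δ₀ * gv T T * ‖X‖ ^ 2 := by ring
  rwa [h3] at h2
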